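/- The λ-IAM is reversible: if (t, C, L, T, d) → (u, D, L', T', d'), then (u, D, L', T', d'⁻¹) → (t, C, L, T, d⁻¹), where d⁻¹ flips the direction (↓⁻¹ = ↑, ↑⁻¹ = ↓). -/
import Mathlib


/-! λ-terms, contexts, and the λ-IAM of Accattoli, Dal Lago, Vanoni. -/

inductive Term : Type
  | var : ℕ → Term
  | lam : ℕ → Term → Term
  | app : Term → Term → Term
deriving DecidableEq

inductive Ctx : Type
  | hole : Ctx
  | lam : ℕ → Ctx → Ctx
  | appL : Ctx → Term → Ctx
  | appR : Term → Ctx → Ctx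
deriving DecidableEq

/-- Plugging a term in a context (capture allowed). -/
def Ctx.plug : Ctx → Term → Term
  | .hole, t => t
  | .lam x C, t => .lam x (C.plug t)
  | .appL C u, t => .app (C.plug t) u
  | .appR u C, t => .app u (C.plug t)

/-- Plugging a context in a context. -/
def Ctx.comp : Ctx → Ctx → Ctx
  | .hole, D => D
  | .lam x C, D => .lam x (C.comp D)
  | .appL C u, D => .appL (C.comp D) u
  | .appR u C, D => .appR u (C.comp D)

/-- The level of a context: the number of applications whose right subterm
contains the hole. -/
def Ctx.level : Ctx → ℕ
  | .hole => 0
  | .lam _ C => C.level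
  | .appL C _ => C.level
  | .appR _ C => C.level + 1

/-- Logged positions: a position together with a log (a list of logged
positions). -/
inductive LPos : Type
  | mk : Term → Ctx → List LPos → LPos

/-- Tape entries: the symbol `•` or a logged position. -/
inductive TEnt : Type
  | bullet : TEnt
  | pos : LPos → TEnt

abbrev Tape := List TEnt
abbrev Log := List LPos

def TEnt.isPos : TEnt → Bool
  | .bullet => false
  | .pos _ => true

inductive Dir : Type
  | down
  | up
deriving DecidableEq

def Dir.flip : Dir → Dir
  | .down => .up
  | .up => .down

/-- λ-IAM states. -/
structure State : Type where
  tm : Term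
  ctx : Ctx
  log : Log
  tape : Tape
  dir : Dir

/-- The eight transitions of the λ-IAM (Figure 2). -/
inductive Step : State → State → Prop
  | bul1 : ∀ (t u : Term) (C : Ctx) (L : Log) (T : Tape),
      Step ⟨.app t u, C, L, T, .down⟩
           ⟨t, C.comp (.appL .hole u), L, .bullet :: T, .down⟩
  | bul2 : ∀ (x : ℕ) (t : Term) (C : Ctx) (L : Log) (T : Tape),
      Step ⟨.lam x t, C, L, .bullet :: T, .down⟩
           ⟨t, C.comp (.lam x .hole), L, T, .down⟩
  | tvar : ∀ (x : ℕ) (C D : Ctx) (Ln L : Log) (T : Tape), Ln.length = D.level →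
      Step ⟨.var x, C.comp (.lam x D), Ln ++ L, T, .down⟩
           ⟨.lam x (D.plug (.var x)), C, L, .pos (.mk (.var x) (.lam x D) Ln) :: T, .up⟩
  | bt2 : ∀ (x : ℕ) (C D : Ctx) (Ln L : Log) (T : Tape), Ln.length = D.level →
      Step ⟨.lam x (D.plug (.var x)), C, L, .pos (.mk (.var x) (.lam x D) Ln) :: T, .down⟩
           ⟨.var x, C.comp (.lam x D), Ln ++ L, T, .up⟩
  | bul3 : ∀ (t u : Term) (C : Ctx) (L : Log) (T : Tape),
      Step ⟨u, C.comp (.appL .hole t), L, .bullet :: T, .up⟩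
           ⟨.app u t, C, L, T, .up⟩
  | bul4 : ∀ (x : ℕ) (t : Term) (C : Ctx) (L : Log) (T : Tape),
      Step ⟨t, C.comp (.lam x .hole), L, T, .up⟩
           ⟨.lam x t, C, L, .bullet :: T, .up⟩
  | arg : ∀ (t u : Term) (C : Ctx) (L : Log) (T : Tape) (p : LPos),
      Step ⟨u, C.comp (.appL .hole t), L, .pos p :: T, .up⟩
           ⟨t, C.comp (.appR u .hole), p :: L, T, .down⟩
  | bt1 : ∀ (t u : Term) (C : Ctx) (L : Log) (T : Tape) (p : LPos),
      Step ⟨t, C.comp (.appR u .hole), p :: L, T, .up⟩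
           ⟨u, C.comp (.appL .hole t), L, .pos p :: T, .down⟩

/-- Final states: no transition applies. -/
def Final (s : State) : Prop := ¬ ∃ s', Step s s'

/-- `n` transitions. -/
def StepN : ℕ → State → State → Prop
  | 0, s, s' => s = s'
  | n + 1, s, s'' => ∃ s', Step s s' ∧ StepN n s' s''

/-- Reachability in any number of transitions. -/
def Reaches : State → State → Prop := Relation.ReflTransGen Step

/-- A tape made of `k` occurrences of `•`. -/
def bulls (k : ℕ) : Tape := List.replicate k .bullet

/-- The initial state of code `t` and depth `k`. -/
def initState (t : Term) (k : ℕ) : State := ⟨t, .hole, [], bulls k, .down⟩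


/-- reversibility of the λ-IAM: flipping the direction reverses
any transition. -/
theorem reversibility (t u : Term) (C D : Ctx) (L L' : Log) (T T' : Tape)
    (d d' : Dir) (h : Step ⟨t, C, L, T, d⟩ ⟨u, D, L', T', d'⟩) :
    Step ⟨u, D, L', T', d'.flip⟩ ⟨t, C, L, T, d.flip⟩ := by
  cases h <;> constructor <;> assumption
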